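/- There is a universal constant C > 0 with the following property. Let G be a connected, locally finite simple graph such that (V_G, d_G) admits a threshold embedding with distortion D into a real Hilbert space. Then for every finite subset S ⊆ V_G and every t ∈ ℕ, the stationary random walk {Z_t} restricted to S satisfies E[ d_G(Z_0, Z_t)² ] ≤ C D² t; that is, the graphic Markov type 2 constant of G is at most √C · D. -/

import Mathlib

/-!
Let `f` map the states of a finite reversible Markov chain into a Hilbert space, moving by at
most `1` along each step. Subtracting from `f(Z_n)` its accumulated drift gives a martingale
`M`, and doing the same along the time-reversed path (which has the same law) gives a second
one `M'`; the two drift sums cancel up to their end terms, so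
`2 (f(Z_t) - f(Z_0)) = M_t - M'_t + O(1)`. Since martingale increments are orthogonal to the
past, `E ‖M_t‖⁴ = O(t²)`, hence `E ‖f(Z_t) - f(Z_0)‖⁴ = O(t²)`.

Applied to the scale-`8^k` map `F_k` of the threshold embedding, Chebyshev's inequality gives
`P(d(Z_0, Z_t) ≥ 8^k) ≤ min(1, O(D⁴ t² / 8^{4k}))`, and summing `64^{k+1}` times these bounds
over all scales gives `E d(Z_0, Z_t)² = O(D² t)`. With second moments instead of fourth ones
this last sum would lose a factor `log t`.
-/

open MeasureTheory
open scoped Classical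

noncomputable section

universe u v w

/-- The transition matrix of the random walk restricted to a finite set `S` of vertices. -/
def restP {V : Type*} (G : SimpleGraph V) [∀ v, Fintype (G.neighborSet v)] (S : Finset V) :
    Matrix ↥S ↥S ℝ := fun x y =>
  if (x : V) = (y : V) then ((G.neighborFinset (x : V)) \ S).card / (G.degree (x : V) : ℝ)
  else if G.Adj (x : V) (y : V) then 1 / (G.degree (x : V) : ℝ) else 0

/-- The stationary measure `π(x) = deg_G(x) / μ_G(S)` of the walk restricted to `S`. -/
def restPi {V : Type*} (G : SimpleGraph V) [∀ v, Fintype (G.neighborSet v)] (S : Finset V)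
    (x : ↥S) : ℝ := (G.degree (x : V) : ℝ) / ∑ z ∈ S, (G.degree z : ℝ)

/-- `Z` is (a realization, on a probability space `(Ω,μ)`, of) the stationary random walk
restricted to `S`. -/
def IsStationaryRestrictedWalk {V : Type*} (G : SimpleGraph V) [∀ v, Fintype (G.neighborSet v)]
    (S : Finset V) {Ω : Type*} [MeasurableSpace Ω] (μ : Measure Ω) (Z : ℕ → Ω → ↥S) : Prop :=
  (∀ (t : ℕ) (s : Set ↥S), MeasurableSet (Z t ⁻¹' s)) ∧
  ∀ (m : ℕ) (x : Fin (m + 1) → ↥S),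
    μ {ω | ∀ i : Fin (m + 1), Z (i : ℕ) ω = x i} =
      ENNReal.ofReal (restPi G S (x 0) * ∏ i : Fin m, restP G S (x i.castSucc) (x i.succ))

open scoped RealInnerProductSpace

lemma mul_le_mul_of_ne_zero_imp {p a b : ℝ} (hp : 0 ≤ p) (h : p ≠ 0 → a ≤ b) :
    p * a ≤ p * b := by
  rcases hp.eq_or_lt with rfl | hp
  · simp
  · exact mul_le_mul_of_nonneg_left (h hp.ne') hp.le

lemma sq_add_two_mul_add_sq_sq_le {n a e c : ℝ} (hn : 0 ≤ n) (he : 0 ≤ e) (hec : e ≤ c)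
    (ha : |a| ≤ n * e) :
    (n ^ 2 + 2 * a + e ^ 2) ^ 2 ≤ n ^ 4 + 4 * n ^ 2 * a + 8 * c ^ 2 * n ^ 2 + 3 * c ^ 4 := by
  have ha2 : a ^ 2 ≤ n ^ 2 * c ^ 2 := by
    rw [← sq_abs]; nlinarith [abs_nonneg a, mul_le_mul_of_nonneg_left hec hn]
  have hae : a * e ^ 2 ≤ n * c ^ 3 := by
    nlinarith [le_abs_self a, mul_le_mul_of_nonneg_left hec hn, pow_le_pow_left₀ he hec 2,
      pow_le_pow_left₀ he hec 3]
  nlinarith [pow_le_pow_left₀ he hec 2, pow_le_pow_left₀ he hec 4, sq_nonneg (n * c - c ^ 2),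
    mul_le_mul_of_nonneg_left (pow_le_pow_left₀ he hec 2) (sq_nonneg n)]

section OneStep

variable {H : Type*} [NormedAddCommGroup H] [InnerProductSpace ℝ H]
variable {ι : Type*} [Fintype ι] {p : ι → ℝ} {ξ : ι → H}

lemma sum_mul_inner_eq_zero (hξ : ∑ i, p i • ξ i = 0) (m : H) : ∑ i, p i * ⟪m, ξ i⟫ = 0 := by
  simp_rw [← real_inner_smul_right, ← inner_sum, hξ, inner_zero_right]

lemma sum_mul_norm_add_sq_le (hp : ∀ i, 0 ≤ p i) (hp1 : ∑ i, p i = 1)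
    (hξ : ∑ i, p i • ξ i = 0) {c : ℝ} (hc : ∀ i, p i ≠ 0 → ‖ξ i‖ ≤ c) (m : H) :
    ∑ i, p i * ‖m + ξ i‖ ^ 2 ≤ ‖m‖ ^ 2 + c ^ 2 := by
  calc ∑ i, p i * ‖m + ξ i‖ ^ 2
      ≤ ∑ i, (p i * (‖m‖ ^ 2 + c ^ 2) + 2 * (p i * ⟪m, ξ i⟫)) := by
        gcongr with i
        have := mul_le_mul_of_ne_zero_imp (hp i) fun h ↦
          pow_le_pow_left₀ (norm_nonneg _) (hc i h) 2
        rw [norm_add_sq_real]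
        linear_combination this
    _ = ‖m‖ ^ 2 + c ^ 2 := by
        rw [Finset.sum_add_distrib, ← Finset.sum_mul, hp1, ← Finset.mul_sum,
          sum_mul_inner_eq_zero hξ]
        ring

lemma sum_mul_norm_add_pow_four_le (hp : ∀ i, 0 ≤ p i) (hp1 : ∑ i, p i = 1)
    (hξ : ∑ i, p i • ξ i = 0) {c : ℝ} (hc : ∀ i, p i ≠ 0 → ‖ξ i‖ ≤ c) (m : H) :
    ∑ i, p i * ‖m + ξ i‖ ^ 4 ≤ ‖m‖ ^ 4 + 8 * c ^ 2 * ‖m‖ ^ 2 + 3 * c ^ 4 := by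
  calc ∑ i, p i * ‖m + ξ i‖ ^ 4
      ≤ ∑ i, (p i * (‖m‖ ^ 4 + 8 * c ^ 2 * ‖m‖ ^ 2 + 3 * c ^ 4)
          + 4 * ‖m‖ ^ 2 * (p i * ⟪m, ξ i⟫)) := by
        gcongr with i
        have := mul_le_mul_of_ne_zero_imp (hp i) fun h ↦
          sq_add_two_mul_add_sq_sq_le (norm_nonneg m) (norm_nonneg _) (hc i h)
            (abs_real_inner_le_norm m (ξ i))
        rw [show ‖m + ξ i‖ ^ 4 = (‖m + ξ i‖ ^ 2) ^ 2 by ring, norm_add_sq_real]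
        linear_combination this
    _ = ‖m‖ ^ 4 + 8 * c ^ 2 * ‖m‖ ^ 2 + 3 * c ^ 4 := by
        rw [Finset.sum_add_distrib, ← Finset.sum_mul, hp1, ← Finset.mul_sum,
          sum_mul_inner_eq_zero hξ]
        ring

end OneStep

lemma add_add_pow_four_le (a b c : ℝ) : (a + b + c) ^ 4 ≤ 27 * (a ^ 4 + b ^ 4 + c ^ 4) := by
  have h2 : (a + b + c) ^ 2 ≤ 3 * (a ^ 2 + b ^ 2 + c ^ 2) := by
    nlinarith [sq_nonneg (a - b), sq_nonneg (b - c), sq_nonneg (a - c)]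
  nlinarith [pow_le_pow_left₀ (sq_nonneg _) h2 2, sq_nonneg (a ^ 2 - b ^ 2),
    sq_nonneg (b ^ 2 - c ^ 2), sq_nonneg (a ^ 2 - c ^ 2)]

lemma sum_range_succ_pow_le {q : ℝ} (hq : 2 ≤ q) (m : ℕ) :
    ∑ k ∈ Finset.range (m + 1), q ^ k ≤ 2 * q ^ m := by
  induction m with
  | zero => simp
  | succ m ih =>
    rw [Finset.sum_range_succ, pow_succ]
    nlinarith [pow_nonneg (by linarith : (0 : ℝ) ≤ q) m]

/-- Below the crossover scale `q ^ m ≈ b` the terms `q ^ k`, above it the terms `b² / q ^ k`,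
form geometric series dominated by their largest term, which is at most `b`. -/
lemma sum_range_min_pow_le {q b : ℝ} (hq : 2 ≤ q) (hb : 1 ≤ b) (n : ℕ) :
    ∑ k ∈ Finset.range n, min (q ^ k) (b ^ 2 / q ^ k) ≤ 4 * b := by
  obtain ⟨m, hqm, hbq⟩ := exists_nat_pow_near hb (by linarith : 1 < q)
  have hq0 : 0 < q := by linarith
  have htail : ∑ k ∈ Finset.Ico (m + 1) (n + m + 1), b ^ 2 / q ^ k ≤ 2 * b := by
    calc ∑ k ∈ Finset.Ico (m + 1) (n + m + 1), b ^ 2 / q ^ k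
        = b ^ 2 * ∑ k ∈ Finset.Ico (m + 1) (n + m + 1), (1 / q) ^ k := by
          simp [Finset.mul_sum, div_eq_mul_inv]
      _ ≤ b ^ 2 * ((1 / q) ^ (m + 1) / (1 - 1 / q)) := by
          gcongr
          exact geom_sum_Ico_le_of_lt_one (by positivity) (by rw [div_lt_one hq0]; linarith)
      _ ≤ b ^ 2 * ((1 / q) ^ (m + 1) / (1 / 2)) := by
          gcongr
          rw [le_sub_comm, div_le_iff₀ hq0]
          linarith
      _ = b ^ 2 * (2 / q ^ (m + 1)) := by ring
      _ ≤ 2 * b := by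
          rw [← mul_div_assoc, div_le_iff₀ (by positivity)]
          nlinarith
  calc ∑ k ∈ Finset.range n, min (q ^ k) (b ^ 2 / q ^ k)
      ≤ ∑ k ∈ Finset.range (n + m + 1), min (q ^ k) (b ^ 2 / q ^ k) :=
        Finset.sum_le_sum_of_subset_of_nonneg (Finset.range_mono (by omega))
          fun _ _ _ ↦ by positivity
    _ = ∑ k ∈ Finset.range (m + 1), min (q ^ k) (b ^ 2 / q ^ k)
          + ∑ k ∈ Finset.Ico (m + 1) (n + m + 1), min (q ^ k) (b ^ 2 / q ^ k) :=
        (Finset.sum_range_add_sum_Ico _ (by omega)).symm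
    _ ≤ ∑ k ∈ Finset.range (m + 1), q ^ k
          + ∑ k ∈ Finset.Ico (m + 1) (n + m + 1), b ^ 2 / q ^ k :=
        add_le_add (Finset.sum_le_sum fun _ _ ↦ min_le_left _ _)
          (Finset.sum_le_sum fun _ _ ↦ min_le_right _ _)
    _ ≤ 4 * b := by linarith [sum_range_succ_pow_le hq m]

lemma sq_le_sum_range_pow_mul_ite (d N : ℕ) (hdN : d ≤ N) :
    (d : ℝ) ^ 2 ≤ ∑ k ∈ Finset.range N, (64 : ℝ) ^ (k + 1) * if (8 : ℝ) ^ k ≤ d then 1 else 0 := by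
  have hterm : ∀ k ∈ Finset.range N,
      0 ≤ (64 : ℝ) ^ (k + 1) * if (8 : ℝ) ^ k ≤ d then 1 else 0 := fun k _ ↦ by
    split_ifs <;> positivity
  rcases Nat.eq_zero_or_pos d with rfl | hd
  · simpa using Finset.sum_nonneg hterm
  set k := Nat.log 8 d
  have hk : 8 ^ k ≤ d := Nat.pow_log_le_self 8 hd.ne'
  have hdk : d < 8 ^ (k + 1) := Nat.lt_pow_succ_log_self (by norm_num) d
  have hkN : k ∈ Finset.range N := Finset.mem_range.2 ((Nat.lt_pow_self (by norm_num)).trans_le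
    (hk.trans hdN))
  calc (d : ℝ) ^ 2 ≤ ((8 : ℝ) ^ (k + 1)) ^ 2 := by gcongr; exact_mod_cast hdk.le
    _ = (64 : ℝ) ^ (k + 1) * if (8 : ℝ) ^ k ≤ d then 1 else 0 := by
        rw [if_pos (by exact_mod_cast hk), ← pow_mul, mul_comm, pow_mul]; norm_num
    _ ≤ _ := Finset.single_le_sum hterm hkN

namespace MarkovChain

variable {σ : Type*} {P : σ → σ → ℝ} {π : σ → ℝ}

def pathWeight (P : σ → σ → ℝ) (π : σ → ℝ) (n : ℕ) (z : Fin (n + 1) → σ) : ℝ :=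
  π (z 0) * ∏ i : Fin n, P (z i.castSucc) (z i.succ)

lemma snoc_apply_zero {n : ℕ} (w : Fin (n + 1) → σ) (y : σ) :
    (Fin.snoc w y : Fin (n + 2) → σ) 0 = w 0 :=
  Fin.snoc_castSucc (i := 0) ..

lemma pathWeight_snoc {n : ℕ} (w : Fin (n + 1) → σ) (y : σ) :
    pathWeight P π (n + 1) (Fin.snoc w y) = pathWeight P π n w * P (w (Fin.last n)) y := by
  simp only [pathWeight, Fin.prod_univ_castSucc, snoc_apply_zero, Fin.snoc_castSucc,
    Fin.succ_castSucc, Fin.succ_last, Fin.snoc_last, mul_assoc]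

lemma pathWeight_nonneg (hP : ∀ x y, 0 ≤ P x y) (hπ : ∀ x, 0 ≤ π x) {n : ℕ}
    (z : Fin (n + 1) → σ) : 0 ≤ pathWeight P π n z :=
  mul_nonneg (hπ _) (Finset.prod_nonneg fun _ _ ↦ hP _ _)

lemma pathWeight_eq_mul_prod_reverse (hbal : ∀ x y, π x * P x y = π y * P y x) {n : ℕ}
    (z : Fin (n + 1) → σ) :
    pathWeight P π n z = π (z (Fin.last n)) * ∏ i : Fin n, P (z i.succ) (z i.castSucc) := by
  induction n with
  | zero => simp [pathWeight]
  | succ n ih =>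
    obtain ⟨w, y, rfl⟩ : ∃ w y, z = Fin.snoc w y := ⟨_, _, (Fin.snoc_init_self z).symm⟩
    rw [pathWeight_snoc, ih w]
    simp only [Fin.prod_univ_castSucc, Fin.snoc_castSucc, Fin.succ_castSucc, Fin.snoc_last,
      Fin.succ_last]
    linear_combination (∏ i : Fin n, P (w i.succ) (w i.castSucc)) * hbal (w (Fin.last n)) y

lemma pathWeight_comp_rev (hbal : ∀ x y, π x * P x y = π y * P y x) {n : ℕ}
    (z : Fin (n + 1) → σ) : pathWeight P π n (z ∘ Fin.rev) = pathWeight P π n z := by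
  rw [pathWeight_eq_mul_prod_reverse hbal z, pathWeight]
  simp only [Function.comp_apply, Fin.rev_zero, Fin.rev_castSucc, Fin.rev_succ]
  congr 1
  exact Fintype.prod_equiv Fin.revPerm _ _ fun i ↦ rfl

variable [Fintype σ]

structure IsMarkovChain (P : σ → σ → ℝ) (π : σ → ℝ) : Prop where
  nonneg : ∀ x y, 0 ≤ P x y
  sum_row : ∀ x, ∑ y, P x y = 1
  init_nonneg : ∀ x, 0 ≤ π x
  sum_init : ∑ x, π x = 1

lemma sum_pathWeight_succ_mul {n : ℕ} (ψ : (Fin (n + 2) → σ) → ℝ) :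
    ∑ z, pathWeight P π (n + 1) z * ψ z
      = ∑ w, pathWeight P π n w * ∑ y, P (w (Fin.last n)) y * ψ (Fin.snoc w y) := by
  rw [← (Fin.snocEquiv fun _ ↦ σ).sum_comp, Fintype.sum_prod_type, Finset.sum_comm]
  refine Finset.sum_congr rfl fun w _ ↦ ?_
  rw [Finset.mul_sum]
  refine Finset.sum_congr rfl fun y _ ↦ ?_
  change pathWeight P π (n + 1) (Fin.snoc w y) * ψ (Fin.snoc w y) = _
  rw [pathWeight_snoc, mul_assoc]

lemma sum_pathWeight (h : IsMarkovChain P π) (n : ℕ) : ∑ z, pathWeight P π n z = 1 := by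
  induction n with
  | zero =>
    rw [← h.sum_init, ← (Equiv.funUnique (Fin 1) σ).symm.sum_comp]
    simp [pathWeight]
  | succ n ih =>
    simpa [h.sum_row, ih] using sum_pathWeight_succ_mul (P := P) (π := π) (n := n) fun _ ↦ 1

lemma sum_pathWeight_mul_add_const (h : IsMarkovChain P π) {n : ℕ} (Φ : (Fin (n + 1) → σ) → ℝ)
    (c : ℝ) : ∑ z, pathWeight P π n z * (Φ z + c) = ∑ z, pathWeight P π n z * Φ z + c := by
  simp only [mul_add, Finset.sum_add_distrib, ← Finset.sum_mul, sum_pathWeight h, one_mul]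

lemma sum_pathWeight_mul_le_sum_pathWeight_mul (h : IsMarkovChain P π) {n : ℕ}
    {Φ Ψ : (Fin (n + 1) → σ) → ℝ} (hΦΨ : ∀ z, Φ z ≤ Ψ z) :
    ∑ z, pathWeight P π n z * Φ z ≤ ∑ z, pathWeight P π n z * Ψ z :=
  Finset.sum_le_sum fun z _ ↦
    mul_le_mul_of_nonneg_left (hΦΨ z) (pathWeight_nonneg h.nonneg h.init_nonneg z)

lemma sum_pathWeight_mul_comp_rev (hbal : ∀ x y, π x * P x y = π y * P y x) {n : ℕ}
    (Φ : (Fin (n + 1) → σ) → ℝ) :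
    ∑ z, pathWeight P π n z * Φ (z ∘ Fin.rev) = ∑ z, pathWeight P π n z * Φ z := by
  have hrev : Function.Involutive fun z : Fin (n + 1) → σ ↦ z ∘ Fin.rev := fun z ↦ by
    ext i; simp
  calc ∑ z, pathWeight P π n z * Φ (z ∘ Fin.rev)
      = ∑ z, pathWeight P π n (z ∘ Fin.rev) * Φ (z ∘ Fin.rev) := by
        simp only [pathWeight_comp_rev hbal]
    _ = ∑ z, pathWeight P π n z * Φ z :=
        Equiv.sum_comp hrev.toPerm fun z ↦ pathWeight P π n z * Φ z

section HilbertValued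

variable {H : Type*} [NormedAddCommGroup H] [InnerProductSpace ℝ H]

def drift (P : σ → σ → ℝ) (f : σ → H) (x : σ) : H := ∑ y, P x y • (f y - f x)

def martingalePart (P : σ → σ → ℝ) (f : σ → H) (n : ℕ) (z : Fin (n + 1) → σ) : H :=
  f (z (Fin.last n)) - f (z 0) - ∑ i : Fin n, drift P f (z i.castSucc)

variable {f : σ → H} {L : ℝ}

lemma norm_drift_le (hP : ∀ x y, 0 ≤ P x y) (hrow : ∀ x, ∑ y, P x y = 1)
    (hf : ∀ x y, P x y ≠ 0 → ‖f y - f x‖ ≤ L) (x : σ) : ‖drift P f x‖ ≤ L :=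
  calc ‖drift P f x‖ ≤ ∑ y, ‖P x y • (f y - f x)‖ := norm_sum_le _ _
    _ ≤ ∑ y, P x y * L := by
        gcongr with y
        rw [norm_smul, Real.norm_of_nonneg (hP x y)]
        exact mul_le_mul_of_ne_zero_imp (hP x y) (hf x y)
    _ = L := by rw [← Finset.sum_mul, hrow, one_mul]

lemma sum_smul_sub_drift_eq_zero (hrow : ∀ x, ∑ y, P x y = 1) (f : σ → H) (x : σ) :
    ∑ y, P x y • (f y - f x - drift P f x) = 0 := by
  simp_rw [smul_sub (P x _) (f _ - f x) (drift P f x)]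
  rw [Finset.sum_sub_distrib, ← Finset.sum_smul, hrow, one_smul, drift, sub_self]

lemma norm_sub_sub_drift_le (hP : ∀ x y, 0 ≤ P x y) (hrow : ∀ x, ∑ y, P x y = 1)
    (hf : ∀ x y, P x y ≠ 0 → ‖f y - f x‖ ≤ L) {x y : σ} (hxy : P x y ≠ 0) :
    ‖f y - f x - drift P f x‖ ≤ 2 * L := by
  linarith [norm_sub_le (f y - f x) (drift P f x), hf x y hxy, norm_drift_le hP hrow hf x]

lemma martingalePart_zero (z : Fin 1 → σ) : martingalePart P f 0 z = 0 := by
  simp [martingalePart]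

lemma martingalePart_snoc {n : ℕ} (w : Fin (n + 1) → σ) (y : σ) :
    martingalePart P f (n + 1) (Fin.snoc w y)
      = martingalePart P f n w + (f y - f (w (Fin.last n)) - drift P f (w (Fin.last n))) := by
  simp only [martingalePart, Fin.snoc_last, snoc_apply_zero, Fin.sum_univ_castSucc,
    Fin.snoc_castSucc]
  abel

lemma sum_pathWeight_mul_norm_martingalePart_sq_le (h : IsMarkovChain P π)
    (hf : ∀ x y, P x y ≠ 0 → ‖f y - f x‖ ≤ L) (n : ℕ) :
    ∑ z, pathWeight P π n z * ‖martingalePart P f n z‖ ^ 2 ≤ 4 * L ^ 2 * n := by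
  induction n with
  | zero => simp [martingalePart_zero]
  | succ n ih =>
    calc ∑ z, pathWeight P π (n + 1) z * ‖martingalePart P f (n + 1) z‖ ^ 2
        ≤ ∑ w, pathWeight P π n w * (‖martingalePart P f n w‖ ^ 2 + (2 * L) ^ 2) := by
          rw [sum_pathWeight_succ_mul]
          refine sum_pathWeight_mul_le_sum_pathWeight_mul h fun w ↦ ?_
          simp only [martingalePart_snoc]
          exact sum_mul_norm_add_sq_le (h.nonneg _) (h.sum_row _)
            (sum_smul_sub_drift_eq_zero h.sum_row f _)
            (fun y ↦ norm_sub_sub_drift_le h.nonneg h.sum_row hf) _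
      _ ≤ 4 * L ^ 2 * ↑(n + 1) := by
          rw [sum_pathWeight_mul_add_const h]
          push_cast
          linarith

lemma sum_pathWeight_mul_norm_martingalePart_pow_four_le (h : IsMarkovChain P π)
    (hf : ∀ x y, P x y ≠ 0 → ‖f y - f x‖ ≤ L) (n : ℕ) :
    ∑ z, pathWeight P π n z * ‖martingalePart P f n z‖ ^ 4 ≤ 64 * L ^ 4 * n ^ 2 := by
  induction n with
  | zero => simp [martingalePart_zero]
  | succ n ih =>
    have h2 := sum_pathWeight_mul_norm_martingalePart_sq_le h hf n
    calc ∑ z, pathWeight P π (n + 1) z * ‖martingalePart P f (n + 1) z‖ ^ 4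
        ≤ ∑ w, pathWeight P π n w * (‖martingalePart P f n w‖ ^ 4
            + 8 * (2 * L) ^ 2 * ‖martingalePart P f n w‖ ^ 2 + 3 * (2 * L) ^ 4) := by
          rw [sum_pathWeight_succ_mul]
          refine sum_pathWeight_mul_le_sum_pathWeight_mul h fun w ↦ ?_
          simp only [martingalePart_snoc]
          exact sum_mul_norm_add_pow_four_le (h.nonneg _) (h.sum_row _)
            (sum_smul_sub_drift_eq_zero h.sum_row f _)
            (fun y ↦ norm_sub_sub_drift_le h.nonneg h.sum_row hf) _
      _ ≤ 64 * L ^ 4 * ↑(n + 1) ^ 2 := by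
          rw [sum_pathWeight_mul_add_const h]
          simp only [mul_add, Finset.sum_add_distrib, mul_left_comm _ (8 * (2 * L) ^ 2),
            ← Finset.mul_sum]
          have := mul_le_mul_of_nonneg_left h2 (by positivity : 0 ≤ 8 * (2 * L) ^ 2)
          push_cast
          nlinarith [pow_two_nonneg (L ^ 2)]

lemma two_smul_sub_eq_martingalePart_sub_martingalePart_comp_rev {n : ℕ}
    (z : Fin (n + 1) → σ) :
    (2 : ℝ) • (f (z (Fin.last n)) - f (z 0))
      = martingalePart P f n z - martingalePart P f n (z ∘ Fin.rev)
        - (drift P f (z (Fin.last n)) - drift P f (z 0)) := by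
  have hrev : ∑ i : Fin n, drift P f ((z ∘ Fin.rev) i.castSucc)
      = ∑ i : Fin n, drift P f (z i.succ) := by
    simp only [Function.comp_apply, Fin.rev_castSucc]
    exact Fintype.sum_equiv Fin.revPerm _ _ fun i ↦ rfl
  have htel : ∑ i : Fin n, drift P f (z i.succ) + drift P f (z 0)
      = ∑ i : Fin n, drift P f (z i.castSucc) + drift P f (z (Fin.last n)) := by
    rw [add_comm, ← Fin.sum_univ_succ (f := fun i ↦ drift P f (z i)), Fin.sum_univ_castSucc]
  simp only [martingalePart]
  rw [hrev]
  simp only [Function.comp_apply, Fin.rev_last, Fin.rev_zero]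
  linear_combination (norm := module) -htel

lemma sum_pathWeight_mul_norm_sub_pow_four_le (h : IsMarkovChain P π)
    (hbal : ∀ x y, π x * P x y = π y * P y x) (hf : ∀ x y, P x y ≠ 0 → ‖f y - f x‖ ≤ L)
    (n : ℕ) :
    ∑ z, pathWeight P π n z * ‖f (z (Fin.last n)) - f (z 0)‖ ^ 4
      ≤ 27 * L ^ 4 * (8 * n ^ 2 + 1) := by
  set M := martingalePart P f n
  have hpoint : ∀ z, ‖f (z (Fin.last n)) - f (z 0)‖ ^ 4
      ≤ 27 / 16 * (‖M z‖ ^ 4 + ‖M (z ∘ Fin.rev)‖ ^ 4) + 27 * L ^ 4 := by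
    intro z
    have hdrift := norm_drift_le (f := f) h.nonneg h.sum_row hf
    have htwo : 2 * ‖f (z (Fin.last n)) - f (z 0)‖ ≤ ‖M z‖ + ‖M (z ∘ Fin.rev)‖ + 2 * L := by
      have := congrArg (fun v : H ↦ ‖v‖) (two_smul_sub_eq_martingalePart_sub_martingalePart_comp_rev
        (P := P) (f := f) z)
      rw [norm_smul, Real.norm_two] at this
      rw [this]
      linarith [norm_sub_le (M z - M (z ∘ Fin.rev))
          (drift P f (z (Fin.last n)) - drift P f (z 0)),
        norm_sub_le (M z) (M (z ∘ Fin.rev)),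
        norm_sub_le (drift P f (z (Fin.last n))) (drift P f (z 0)),
        hdrift (z (Fin.last n)), hdrift (z 0)]
    nlinarith [pow_le_pow_left₀ (by positivity) htwo 4,
      add_add_pow_four_le ‖M z‖ ‖M (z ∘ Fin.rev)‖ (2 * L)]
  calc ∑ z, pathWeight P π n z * ‖f (z (Fin.last n)) - f (z 0)‖ ^ 4
      ≤ ∑ z, pathWeight P π n z * (27 / 16 * (‖M z‖ ^ 4 + ‖M (z ∘ Fin.rev)‖ ^ 4)
          + 27 * L ^ 4) :=
        sum_pathWeight_mul_le_sum_pathWeight_mul h hpoint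
    _ = 27 / 8 * ∑ z, pathWeight P π n z * ‖M z‖ ^ 4 + 27 * L ^ 4 := by
        rw [sum_pathWeight_mul_add_const h]
        simp only [mul_left_comm _ (27 / 16 : ℝ), ← Finset.mul_sum, mul_add,
          Finset.sum_add_distrib, sum_pathWeight_mul_comp_rev hbal fun z ↦ ‖M z‖ ^ 4]
        ring
    _ ≤ 27 * L ^ 4 * (8 * n ^ 2 + 1) := by
        nlinarith [sum_pathWeight_mul_norm_martingalePart_pow_four_le h hf n]

lemma sum_pathWeight_mul_ite_le (h : IsMarkovChain P π) (hbal : ∀ x y, π x * P x y = π y * P y x)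
    {F : σ → H} (hF : ∀ x y, P x y ≠ 0 → ‖F y - F x‖ ≤ 1) (ρ : σ → σ → ℕ) {a D : ℝ}
    (ha : 0 < a) (hD : 0 < D) (hthr : ∀ x y, a ≤ ρ x y → a / D ≤ ‖F x - F y‖) (t : ℕ) :
    ∑ z, pathWeight P π t z * (if a ≤ ρ (z 0) (z (Fin.last t)) then 1 else 0)
      ≤ (D / a) ^ 4 * (27 * (8 * t ^ 2 + 1)) := by
  have hpoint : ∀ z : Fin (t + 1) → σ, (if a ≤ ρ (z 0) (z (Fin.last t)) then 1 else 0)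
      ≤ (D / a) ^ 4 * ‖F (z (Fin.last t)) - F (z 0)‖ ^ 4 := fun z ↦ by
    split_ifs with hz
    · have := hthr _ _ hz
      rw [norm_sub_rev, div_le_iff₀ hD] at this
      rw [← mul_pow]
      exact one_le_pow₀ (by rw [div_mul_eq_mul_div, le_div_iff₀ ha]; linarith)
    · positivity
  calc _ ≤ ∑ z, pathWeight P π t z * ((D / a) ^ 4 * ‖F (z (Fin.last t)) - F (z 0)‖ ^ 4) :=
        sum_pathWeight_mul_le_sum_pathWeight_mul h hpoint
    _ = (D / a) ^ 4 * ∑ z, pathWeight P π t z * ‖F (z (Fin.last t)) - F (z 0)‖ ^ 4 := by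
        simp only [Finset.mul_sum, mul_left_comm]
    _ ≤ (D / a) ^ 4 * (27 * (8 * t ^ 2 + 1)) := by
        gcongr
        simpa using sum_pathWeight_mul_norm_sub_pow_four_le h hbal hF t

lemma pow_succ_mul_sum_pathWeight_mul_ite_le (h : IsMarkovChain P π)
    (hbal : ∀ x y, π x * P x y = π y * P y x) {F : σ → H}
    (hF : ∀ x y, P x y ≠ 0 → ‖F y - F x‖ ≤ 1) (ρ : σ → σ → ℕ) {D : ℝ} (hD : 1 ≤ D) (k : ℕ)
    (hthr : ∀ x y, (8 : ℝ) ^ k ≤ ρ x y → (8 : ℝ) ^ k / D ≤ ‖F x - F y‖) {t : ℕ} (ht : 0 < t) :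
    (64 : ℝ) ^ (k + 1) * ∑ z, pathWeight P π t z
        * (if (8 : ℝ) ^ k ≤ ρ (z 0) (z (Fin.last t)) then 1 else 0)
      ≤ 64 * min ((64 : ℝ) ^ k) ((16 * D ^ 2 * t) ^ 2 / 64 ^ k) := by
  have ht1 : (1 : ℝ) ≤ t := by exact_mod_cast ht
  rw [mul_min_of_nonneg _ _ (by norm_num : (0 : ℝ) ≤ 64)]
  refine le_min ?_ ?_
  · have : ∑ z, pathWeight P π t z * (if (8 : ℝ) ^ k ≤ ρ (z 0) (z (Fin.last t)) then 1 else 0)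
        ≤ ∑ z, pathWeight P π t z * 1 :=
      sum_pathWeight_mul_le_sum_pathWeight_mul h fun z ↦ by split_ifs <;> norm_num
    rw [Finset.sum_congr rfl fun z _ ↦ mul_one _, sum_pathWeight h] at this
    rw [pow_succ]
    nlinarith [pow_pos (by norm_num : (0 : ℝ) < 64) k]
  · have h64 : ((8 : ℝ) ^ k) ^ 4 = (64 ^ k) ^ 2 := by
      rw [← pow_mul, ← pow_mul, (by norm_num : (64 : ℝ) = 8 ^ 2), ← pow_mul]; ring_nf
    calc _ ≤ (64 : ℝ) ^ (k + 1) * ((D / 8 ^ k) ^ 4 * (27 * (8 * t ^ 2 + 1))) := by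
          gcongr
          exact sum_pathWeight_mul_ite_le h hbal hF ρ (by positivity) (by linarith) hthr t
      _ = 64 * (27 * D ^ 4 * (8 * t ^ 2 + 1) / 64 ^ k) := by
          rw [div_pow, h64]; field_simp; ring
      _ ≤ 64 * ((16 * D ^ 2 * t) ^ 2 / 64 ^ k) := by
          gcongr
          nlinarith [mul_nonneg (pow_nonneg (by linarith : 0 ≤ D) 4)
            (by nlinarith : (0 : ℝ) ≤ 40 * t ^ 2 - 27)]

theorem sum_pathWeight_mul_sq_le_of_threshold (h : IsMarkovChain P π)
    (hbal : ∀ x y, π x * P x y = π y * P y x) (ρ : σ → σ → ℕ) {D : ℝ} (hD : 1 ≤ D)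
    {F : ℕ → σ → H} (hF : ∀ k x y, P x y ≠ 0 → ‖F k y - F k x‖ ≤ 1)
    (hthr : ∀ k x y, (8 : ℝ) ^ k ≤ ρ x y → (8 : ℝ) ^ k / D ≤ ‖F k x - F k y‖) {t : ℕ}
    (ht : 0 < t) :
    ∑ z, pathWeight P π t z * (ρ (z 0) (z (Fin.last t)) : ℝ) ^ 2 ≤ 4096 * D ^ 2 * t := by
  set N := Finset.univ.sup fun p : σ × σ ↦ ρ p.1 p.2
  set χ : ℕ → (Fin (t + 1) → σ) → ℝ :=
    fun k z ↦ if (8 : ℝ) ^ k ≤ ρ (z 0) (z (Fin.last t)) then 1 else 0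
  have hb : 1 ≤ 16 * D ^ 2 * t := by
    have : (1 : ℝ) ≤ t := by exact_mod_cast ht
    nlinarith
  calc ∑ z, pathWeight P π t z * (ρ (z 0) (z (Fin.last t)) : ℝ) ^ 2
      ≤ ∑ z, pathWeight P π t z * ∑ k ∈ Finset.range N, (64 : ℝ) ^ (k + 1) * χ k z :=
        sum_pathWeight_mul_le_sum_pathWeight_mul h fun z ↦ sq_le_sum_range_pow_mul_ite _ _
          (Finset.le_sup (f := fun p : σ × σ ↦ ρ p.1 p.2) (Finset.mem_univ (z 0, z (Fin.last t))))
    _ = ∑ k ∈ Finset.range N, (64 : ℝ) ^ (k + 1) * ∑ z, pathWeight P π t z * χ k z := by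
        simp only [Finset.mul_sum]
        rw [Finset.sum_comm]
        simp only [mul_left_comm]
    _ ≤ ∑ k ∈ Finset.range N, 64 * min ((64 : ℝ) ^ k) ((16 * D ^ 2 * t) ^ 2 / 64 ^ k) :=
        Finset.sum_le_sum fun k _ ↦
          pow_succ_mul_sum_pathWeight_mul_ite_le h hbal (hF k) ρ hD k (hthr k) ht
    _ ≤ 64 * (4 * (16 * D ^ 2 * t)) := by
        rw [← Finset.mul_sum]
        gcongr
        exact sum_range_min_pow_le (by norm_num) hb N
    _ = 4096 * D ^ 2 * t := by ring

end HilbertValued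

end MarkovChain

lemma integral_comp_path_eq_sum {σ Ω : Type*} [Fintype σ] [MeasurableSpace Ω] {μ : Measure Ω}
    {Z : ℕ → Ω → σ} (hZ : ∀ (t : ℕ) (s : Set σ), MeasurableSet (Z t ⁻¹' s)) {n : ℕ}
    {w : (Fin (n + 1) → σ) → ℝ} (hw0 : ∀ x, 0 ≤ w x)
    (hw : ∀ x, μ {ω | ∀ i : Fin (n + 1), Z i ω = x i} = ENNReal.ofReal (w x))
    (Φ : (Fin (n + 1) → σ) → ℝ) :
    ∫ ω, Φ (fun i ↦ Z i ω) ∂μ = ∑ x, w x * Φ x := by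
  set A : (Fin (n + 1) → σ) → Set Ω := fun x ↦ {ω | ∀ i : Fin (n + 1), Z i ω = x i}
  have hA : ∀ x, MeasurableSet (A x) := fun x ↦ by
    simpa only [A, Set.ofPred_forall, Set.preimage, Set.mem_singleton_iff] using
      MeasurableSet.iInter fun i : Fin (n + 1) ↦ hZ i {x i}
  have hsum : (fun ω ↦ Φ fun i : Fin (n + 1) ↦ Z i ω)
      = fun ω ↦ ∑ x, (A x).indicator (fun _ ↦ Φ x) ω := by
    ext ω
    rw [Finset.sum_eq_single_of_mem (fun i : Fin (n + 1) ↦ Z i ω) (Finset.mem_univ _)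
      fun x _ hx ↦ Set.indicator_of_notMem (fun hω ↦ hx (funext fun i ↦ (hω i).symm)) _,
      Set.indicator_of_mem (s := A _) fun i ↦ rfl]
  rw [hsum, integral_finsetSum _ fun x _ ↦ (integrable_indicator_iff (hA x)).2
    (integrableOn_const (by rw [hw]; exact ENNReal.ofReal_ne_top))]
  refine Finset.sum_congr rfl fun x _ ↦ ?_
  rw [integral_indicator_const _ (hA x), measureReal_def, hw, ENNReal.toReal_ofReal (hw0 x),
    smul_eq_mul]

section RestrictedWalk

variable {V : Type*} (G : SimpleGraph V) [∀ v, Fintype (G.neighborSet v)] (S : Finset V)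

lemma restP_nonneg (x y : S) : 0 ≤ restP G S x y := by
  unfold restP
  split_ifs <;> positivity

lemma dist_le_one_of_restP_ne_zero {x y : S} (h : restP G S x y ≠ 0) : G.dist x y ≤ 1 := by
  unfold restP at h
  split_ifs at h with hxy hadj
  · simp [hxy]
  · exact (SimpleGraph.dist_eq_one_iff_adj.2 hadj).le
  · exact absurd rfl h

lemma sum_restP (hdeg : ∀ x : S, 0 < G.degree x) (x : S) : ∑ y, restP G S x y = 1 := by
  have hsplit : ∀ y : S, restP G S x y = (if x = y then ((G.neighborFinset x \ S).card : ℝ)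
      / G.degree x else 0) + if G.Adj x y then 1 / (G.degree x : ℝ) else 0 := fun y ↦ by
    unfold restP
    by_cases hxy : x = y
    · simp [hxy]
    · simp [hxy]
  simp only [hsplit, Finset.sum_add_distrib, Finset.sum_ite_eq, Finset.mem_univ, if_true]
  have hfilter : S.filter (G.Adj x) = G.neighborFinset x ∩ S := by
    ext v; simp [and_comm]
  have hcard := Finset.card_sdiff_add_card_inter (G.neighborFinset x) S
  rw [G.card_neighborFinset_eq_degree] at hcard
  rw [Finset.sum_coe_sort S fun v ↦ if G.Adj x v then 1 / (G.degree x : ℝ) else 0,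
    ← Finset.sum_filter, Finset.sum_const, nsmul_eq_mul, hfilter]
  have := hdeg x
  field_simp
  exact_mod_cast hcard

lemma restPi_mul_restP_comm (x y : S) :
    restPi G S x * restP G S x y = restPi G S y * restP G S y x := by
  by_cases hxy : x = y
  · rw [hxy]
  have hne : (x : V) ≠ y := fun h ↦ hxy (Subtype.ext h)
  unfold restP restPi
  by_cases hadj : G.Adj x y
  · have := hadj.degree_pos_left
    have := hadj.degree_pos_right
    simp only [hne, hne.symm, hadj, hadj.symm, if_true, if_false]
    field_simp
  · have hadj' : ¬G.Adj y x := fun h ↦ hadj h.symm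
    simp [hne, hne.symm, hadj, hadj']

lemma sum_restPi (hS : S.Nonempty) (hdeg : ∀ x : S, 0 < G.degree x) :
    ∑ x : S, restPi G S x = 1 := by
  have hpos : 0 < ∑ z ∈ S, (G.degree z : ℝ) := by
    obtain ⟨v, hv⟩ := hS
    exact Finset.sum_pos (fun z hz ↦ by exact_mod_cast hdeg ⟨z, hz⟩) ⟨v, hv⟩
  unfold restPi
  rw [← Finset.sum_div, Finset.sum_coe_sort S fun z ↦ (G.degree z : ℝ), div_self hpos.ne']

lemma isMarkovChain_restP (hS : S.Nonempty) (hdeg : ∀ x : S, 0 < G.degree x) :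
    MarkovChain.IsMarkovChain (restP G S) (restPi G S) where
  nonneg := restP_nonneg G S
  sum_row := sum_restP G S hdeg
  init_nonneg _ := by unfold restPi; positivity
  sum_init := sum_restPi G S hS hdeg

end RestrictedWalk

lemma one_le_of_threshold_of_preconnected {V E : Type*} [Nontrivial V] {G : SimpleGraph V}
    (hG : G.Preconnected) [SeminormedAddCommGroup E] {f : V → E}
    (hlip : ∀ x y, ‖f x - f y‖ ≤ (G.dist x y : ℝ)) {D : ℝ} (hD : 0 < D)
    (hthr : ∀ x y, 1 ≤ (G.dist x y : ℝ) → 1 / D ≤ ‖f x - f y‖) : 1 ≤ D := by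
  obtain ⟨x, y, hxy⟩ : ∃ x y, G.Adj x y :=
    ⟨_, hG.exists_adj_of_nontrivial (Classical.arbitrary V)⟩
  have hdist : (G.dist x y : ℝ) = 1 := by exact_mod_cast SimpleGraph.dist_eq_one_iff_adj.2 hxy
  have := (hthr x y hdist.ge).trans (hlip x y)
  rwa [hdist, div_le_one hD] at this

/-- **Threshold embeddings bound the graphic Markov type 2 constant**
(Corollary 2.4 / `cor:threshold`).

There is a universal constant `C > 0` such that: whenever a connected, locally finite graph
`G` admits a threshold embedding with distortion `D` into a Hilbert space (a family of
`1`-Lipschitz maps `F_k : V_G → H` with `d_G(x,y) ≥ 8^k → ‖F_k x - F_k y‖ ≥ 8^k/D`), then for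
every finite `S ⊆ V_G` and every `t ∈ ℕ` the stationary random walk restricted to `S`
satisfies `E[d_G(Z_0,Z_t)²] ≤ C D² t`; i.e. the graphic Markov type `2` constant of `G` is at
most `√C ⬝ D`. -/
theorem graphic_markov_type_of_threshold_embedding :
    ∃ C : ℝ, 0 < C ∧
      ∀ (V : Type u) (G : SimpleGraph V) [∀ v, Fintype (G.neighborSet v)],
        G.Connected →
        ∀ (H : Type v) [NormedAddCommGroup H] [InnerProductSpace ℝ H]
          (D : ℝ), 0 < D →
          ∀ F : ℕ → V → H,
            (∀ (k : ℕ) (x y : V), ‖F k x - F k y‖ ≤ (G.dist x y : ℝ)) →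
            (∀ (k : ℕ) (x y : V), (8 : ℝ) ^ k ≤ (G.dist x y : ℝ) →
              (8 : ℝ) ^ k / D ≤ ‖F k x - F k y‖) →
            ∀ (S : Finset V) (Ω : Type w) [MeasurableSpace Ω] (μ : Measure Ω),
              IsProbabilityMeasure μ →
              ∀ Z : ℕ → Ω → ↥S, IsStationaryRestrictedWalk G S μ Z →
                ∀ t : ℕ,
                  ∫ ω, (G.dist ((Z 0 ω : V)) ((Z t ω : V)) : ℝ) ^ 2 ∂μ ≤ C * D ^ 2 * t := by
  refine ⟨4096, by norm_num, ?_⟩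
  intro V G _ hG H _ _ D hD F hlip hthr S Ω _ μ hμ Z hZ t
  rcases Nat.eq_zero_or_pos t with rfl | ht
  · simp
  rcases subsingleton_or_nontrivial V with hV | hV
  · simp only [fun ω ↦ Subsingleton.elim (Z t ω : V) (Z 0 ω), G.dist_self, Nat.cast_zero,
      zero_pow two_ne_zero, integral_zero]
    positivity
  have hdeg : ∀ x : S, 0 < G.degree x := fun x ↦ hG.preconnected.degree_pos_of_nontrivial x
  have hS : S.Nonempty := ⟨_, (Z 0 (nonempty_of_isProbabilityMeasure μ).some).2⟩
  have hD1 : 1 ≤ D := one_le_of_threshold_of_preconnected hG.preconnected (hlip 0) hD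
    fun x y ↦ by simpa using hthr 0 x y
  have hstep : ∀ k (x y : S), restP G S x y ≠ 0 → ‖F k y - F k x‖ ≤ 1 := fun k x y hxy ↦
    (hlip k y x).trans (by rw [G.dist_comm]; exact_mod_cast dist_le_one_of_restP_ne_zero G S hxy)
  have hchain := isMarkovChain_restP G S hS hdeg
  calc ∫ ω, (G.dist (Z 0 ω : V) (Z t ω : V) : ℝ) ^ 2 ∂μ
      = ∑ z, MarkovChain.pathWeight (restP G S) (restPi G S) t z
          * (G.dist (z 0 : V) (z (Fin.last t) : V) : ℝ) ^ 2 :=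
        integral_comp_path_eq_sum hZ.1
          (MarkovChain.pathWeight_nonneg hchain.nonneg hchain.init_nonneg) (hZ.2 t)
          fun z ↦ (G.dist (z 0 : V) (z (Fin.last t) : V) : ℝ) ^ 2
    _ ≤ 4096 * D ^ 2 * t :=
        MarkovChain.sum_pathWeight_mul_sq_le_of_threshold hchain (restPi_mul_restP_comm G S)
          (fun x y ↦ G.dist x y) hD1 (F := fun k x ↦ F k x) hstep (fun k x y ↦ hthr k x y) ht

end
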